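/- Let A be a finite nonempty set of actions, let ζ : A → ℝ be the expected-prediction value function (EAP), let H : A → ℝ be the fitness-weighted average heuristic (FAH) with V_min ≤ H(a) ≤ V_max for every a ∈ A, and let κ ≥ 0 be the heuristic weight. Let a* be an action maximizing ζ over A (the optimal greedy action) and let ã be an action maximizing the heuristic-augmented value ξ(a) = κ·H(a) + ζ(a) over A (the greedy action with heuristics). Then the EAP error satisfies ζ(a*) − ζ(ã) ≤ κ·(V_max − V_min). -/

import Mathlib

theorem sub_le_sub_of_forall_add_le {A G : Type*} [AddCommGroup G] [PartialOrder G]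
    [IsOrderedAddMonoid G] {f g : A → G} {b : A} (hb : ∀ a, g a + f a ≤ g b + f b) (a : A) :
    f a - f b ≤ g b - g a := by
  rw [sub_le_sub_iff, add_comm (f a)]
  exact hb a

theorem mul_sub_le_mul_sub_of_le {R : Type*} [Ring R] [PartialOrder R] [IsOrderedRing R]
    {κ x y lo hi : R} (hκ : 0 ≤ κ) (hx : x ≤ hi) (hy : lo ≤ y) :
    κ * x - κ * y ≤ κ * (hi - lo) := by
  rw [← mul_sub]
  exact mul_le_mul_of_nonneg_left (sub_le_sub hx hy) hκ

theorem eap_error_upper_bound_general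
    {A : Type*}
    (ζ H : A → ℝ) (Vmin Vmax κ : ℝ)
    (hκ : 0 ≤ κ)
    (hbound : ∀ a : A, Vmin ≤ H a ∧ H a ≤ Vmax)
    (astar atilde : A)
    (htilde : ∀ a : A, κ * H a + ζ a ≤ κ * H atilde + ζ atilde) :
    ζ astar - ζ atilde ≤ κ * (Vmax - Vmin) :=
  calc ζ astar - ζ atilde ≤ κ * H atilde - κ * H astar :=
        sub_le_sub_of_forall_add_le (g := fun a ↦ κ * H a) htilde astar
    _ ≤ κ * (Vmax - Vmin) := mul_sub_le_mul_sub_of_le hκ (hbound atilde).2 (hbound astar).1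

/-- Theorem 1 of the paper: the EAP error of the heuristic-augmented greedy
policy relative to the optimal greedy policy is bounded by `κ * (Vmax - Vmin)`. -/
theorem eap_error_upper_bound
    {A : Type*} [Fintype A] [Nonempty A]
    (ζ H : A → ℝ) (Vmin Vmax κ : ℝ)
    (hκ : 0 ≤ κ)
    (hbound : ∀ a : A, Vmin ≤ H a ∧ H a ≤ Vmax)
    (astar atilde : A)
    (hstar : ∀ a : A, ζ a ≤ ζ astar)
    (htilde : ∀ a : A, κ * H a + ζ a ≤ κ * H atilde + ζ atilde) :
    ζ astar - ζ atilde ≤ κ * (Vmax - Vmin) :=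
  eap_error_upper_bound_general ζ H Vmin Vmax κ hκ hbound astar atilde htilde
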